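/- arXiv:0710.3681 — 2 statements merged into one kernel-verified Lean document; each statement's English description precedes it below -/
import Mathlib

section
/- For real numbers a > b ≥ c > d > 0, exp(1 - L(c,d)/L(a,b)) < I(a,b)/I(c,d) < exp(L(a,b)/L(c,d) - 1), where L and I are the logarithmic and identric means. -/
/-!
Write `L₁ = L(a,b)` and `L₀ = L(c,d)`. Since `log I(x,y) = log y + x / L(x,y) - 1 = log x + y / L(x,y) - 1`,
the logarithm of `I(a,b) / I(c,d)` is `a / L₁ + log (b / c) - d / L₀`. Both bounds then come from the
chain `d < L₀ < c ≤ b < L₁ < a`, the mean inequalities `√(xy) ≤ L(x,y) ≤ (x + y) / 2`, and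
`1 - c / b ≤ log (b / c) ≤ b / c - 1`: each of the two gaps is a sum of four terms, each of which is
nonnegative by one of these facts.
-/

noncomputable def logMean (x y : ℝ) : ℝ :=
  if x = y then x else (x - y) / (Real.log x - Real.log y)

noncomputable def identricMean (x y : ℝ) : ℝ :=
  if x = y then x else (1 / Real.exp 1) * (x ^ x / y ^ y) ^ (1 / (x - y))

open Real

namespace Real

lemma two_mul_log_le_sub_inv {t : ℝ} (ht : 1 ≤ t) : 2 * log t ≤ t - t⁻¹ := by
  have h := self_le_sinh_iff.2 (log_nonneg ht)
  rw [sinh_log (by linarith)] at h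
  linarith

lemma log_sub_log_pos {x y : ℝ} (hy : 0 < y) (hyx : y < x) : 0 < log x - log y :=
  sub_pos.2 (log_lt_log hy hyx)

lemma two_mul_sub_div_add_le_log_sub_log {x y : ℝ} (hy : 0 < y) (hyx : y < x) :
    2 * (x - y) / (x + y) ≤ log x - log y := by
  -- keep the first term of `log (1 + 1/u) = ∑ 2 / ((2k+1) (2u+1)^(2k+1))` with `u = y / (x - y)`
  have hs := hasSum_log_one_add_inv (div_pos hy (sub_pos.2 hyx))
  have h0 := le_hasSum hs 0 fun k _ => by positivity
  have hxy : x - y ≠ 0 := (sub_pos.2 hyx).ne'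
  have e1 : 1 + (y / (x - y))⁻¹ = x / y := by field_simp; ring
  have e2 : 1 / (2 * (y / (x - y)) + 1) = (x - y) / (x + y) := by field_simp; ring
  rw [e1, e2, log_div (by linarith) hy.ne'] at h0
  norm_num at h0
  rwa [mul_div_assoc]

end Real

section Means

variable {x y : ℝ}

lemma logMean_of_ne (h : x ≠ y) : logMean x y = (x - y) / (log x - log y) := if_neg h

lemma sub_div_logMean (h : x ≠ y) : (x - y) / logMean x y = log x - log y := by
  rw [logMean_of_ne h, div_div_cancel₀ (sub_ne_zero.2 h)]

lemma lt_logMean (hy : 0 < y) (hyx : y < x) : y < logMean x y := by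
  rw [logMean_of_ne hyx.ne', lt_div_iff₀ (log_sub_log_pos hy hyx), ← log_div (by linarith) hy.ne']
  have h := log_lt_sub_one_of_pos (div_pos (hy.trans hyx) hy)
    (by rw [Ne, div_eq_one_iff_eq hy.ne']; exact hyx.ne')
  have e : y * (x / y - 1) = x - y := by field_simp
  nlinarith

lemma logMean_lt (hy : 0 < y) (hyx : y < x) : logMean x y < x := by
  have hx := hy.trans hyx
  rw [logMean_of_ne hyx.ne', div_lt_iff₀ (log_sub_log_pos hy hyx)]
  have h := log_lt_sub_one_of_pos (div_pos hy hx)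
    (by rw [Ne, div_eq_one_iff_eq hx.ne']; exact hyx.ne)
  rw [log_div hy.ne' hx.ne'] at h
  have e : x * (y / x - 1) = y - x := by field_simp
  nlinarith

lemma mul_le_logMean_sq (hy : 0 < y) (hyx : y < x) : x * y ≤ logMean x y ^ 2 := by
  have hx := hy.trans hyx
  have hu : 0 < √x := sqrt_pos.2 hx
  have hv : 0 < √y := sqrt_pos.2 hy
  have hlog : log x - log y = 2 * log (√x / √y) := by
    rw [log_div hu.ne' hv.ne', log_sqrt hx.le, log_sqrt hy.le]; ring
  have h := two_mul_log_le_sub_inv ((one_le_div hv).2 (sqrt_le_sqrt hyx.le))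
  have hGL : √x * √y ≤ logMean x y := by
    rw [logMean_of_ne hyx.ne', le_div_iff₀ (log_sub_log_pos hy hyx), hlog]
    calc √x * √y * (2 * log (√x / √y)) ≤ √x * √y * (√x / √y - (√x / √y)⁻¹) := by gcongr
      _ = √x ^ 2 - √y ^ 2 := by field_simp
      _ = x - y := by rw [sq_sqrt hx.le, sq_sqrt hy.le]
  calc x * y = (√x * √y) ^ 2 := by rw [mul_pow, sq_sqrt hx.le, sq_sqrt hy.le]
    _ ≤ logMean x y ^ 2 := by gcongr

lemma two_mul_logMean_le (hy : 0 < y) (hyx : y < x) : 2 * logMean x y ≤ x + y := by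
  have h := two_mul_sub_div_add_le_log_sub_log hy hyx
  rw [logMean_of_ne hyx.ne', ← mul_div_assoc, div_le_iff₀ (log_sub_log_pos hy hyx)]
  rw [div_le_iff₀ (by linarith)] at h
  linarith

lemma identricMean_eq_exp (hy : 0 < y) (hyx : y < x) :
    identricMean x y = exp (log y + x / logMean x y - 1) := by
  have hx : 0 < x := hy.trans hyx
  have hxy : x - y ≠ 0 := sub_ne_zero_of_ne hyx.ne'
  rw [identricMean, if_neg hyx.ne', logMean_of_ne hyx.ne', rpow_def_of_pos hx, rpow_def_of_pos hy,
    ← exp_sub, rpow_def_of_pos (exp_pos _), log_exp, one_div, ← exp_neg, ← exp_add]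
  congr 1
  field_simp
  ring

end Means

section TwoPairs

variable {a b c d : ℝ}

lemma identricMean_div_identricMean (hd : 0 < d) (hcd : d < c) (hb : 0 < b) (hab : b < a) :
    identricMean a b / identricMean c d =
      exp (a / logMean a b + (log b - log c) - d / logMean c d) := by
  rw [identricMean_eq_exp hb hab, identricMean_eq_exp hd hcd, ← exp_sub]
  have h := sub_div_logMean hcd.ne'
  rw [sub_div] at h
  congr 1
  linarith

lemma one_sub_logMean_div_lt (hd : 0 < d) (hcd : d < c) (hbc : c ≤ b) (hab : b < a) :
    1 - logMean c d / logMean a b < a / logMean a b + (log b - log c) - d / logMean c d := by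
  have hc := hd.trans hcd
  have hb := hc.trans_le hbc
  set L₁ := logMean a b
  set L₀ := logMean c d
  have hbL₁ : b < L₁ := lt_logMean hb hab
  have hdL₀ : d < L₀ := lt_logMean hd hcd
  have hL₀c : L₀ < c := logMean_lt hd hcd
  have hL₁ : 0 < L₁ := hb.trans hbL₁
  have hL₀ : 0 < L₀ := hd.trans hdL₀
  have hA : 0 ≤ (a + b) / L₁ - 2 := by
    rw [sub_nonneg, le_div_iff₀ hL₁]; linarith [two_mul_logMean_le hb hab]
  have hb_sub : 0 < (b - L₀) * (1 / b - 1 / L₁) :=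
    mul_pos (by linarith) (sub_pos.2 (one_div_lt_one_div_of_lt hb hbL₁))
  have hm : L₀ * (1 / c - 1 / b) ≤ log b - log c := by
    have h := one_sub_inv_le_log_of_pos (div_pos hb hc)
    rw [inv_div, log_div hb.ne' hc.ne'] at h
    calc L₀ * (1 / c - 1 / b) ≤ c * (1 / c - 1 / b) :=
          mul_le_mul_of_nonneg_right hL₀c.le (sub_nonneg.2 (one_div_le_one_div_of_le hc hbc))
      _ = 1 - c / b := by field_simp
      _ ≤ log b - log c := h
  have hG : 0 ≤ L₀ / c - d / L₀ := by
    rw [sub_nonneg, div_le_div_iff₀ hL₀ hc]; nlinarith [mul_le_logMean_sq hd hcd]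
  have hsum : (a / L₁ + (log b - log c) - d / L₀) - (1 - L₀ / L₁) =
      ((a + b) / L₁ - 2) + (b - L₀) * (1 / b - 1 / L₁) + ((log b - log c) - L₀ * (1 / c - 1 / b))
        + (L₀ / c - d / L₀) := by
    field_simp
    ring
  linarith

lemma lt_logMean_div_sub_one (hd : 0 < d) (hcd : d < c) (hbc : c ≤ b) (hab : b < a) :
    a / logMean a b + (log b - log c) - d / logMean c d < logMean a b / logMean c d - 1 := by
  have hc := hd.trans hcd
  have hb := hc.trans_le hbc
  set L₁ := logMean a b
  set L₀ := logMean c d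
  have hbL₁ : b < L₁ := lt_logMean hb hab
  have hdL₀ : d < L₀ := lt_logMean hd hcd
  have hL₀c : L₀ < c := logMean_lt hd hcd
  have hL₁ : 0 < L₁ := hb.trans hbL₁
  have hL₀ : 0 < L₀ := hd.trans hdL₀
  have hc_sub : 0 < (L₁ - c) * (1 / L₀ - 1 / c) :=
    mul_pos (by linarith) (sub_pos.2 (one_div_lt_one_div_of_lt hL₀ hL₀c))
  have hA : 0 ≤ (c + d) / L₀ - 2 := by
    rw [sub_nonneg, le_div_iff₀ hL₀]; linarith [two_mul_logMean_le hd hcd]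
  have hm : log b - log c ≤ L₁ * (1 / c - 1 / b) := by
    have h := log_le_sub_one_of_pos (div_pos hb hc)
    rw [log_div hb.ne' hc.ne'] at h
    calc log b - log c ≤ b / c - 1 := h
      _ = b * (1 / c - 1 / b) := by field_simp
      _ ≤ L₁ * (1 / c - 1 / b) :=
          mul_le_mul_of_nonneg_right hbL₁.le (sub_nonneg.2 (one_div_le_one_div_of_le hc hbc))
  have hG : 0 ≤ L₁ / b - a / L₁ := by
    rw [sub_nonneg, div_le_div_iff₀ hL₁ hb]; nlinarith [mul_le_logMean_sq hb hab]
  have hsum : (L₁ / L₀ - 1) - (a / L₁ + (log b - log c) - d / L₀) =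
      (L₁ - c) * (1 / L₀ - 1 / c) + ((c + d) / L₀ - 2) + (L₁ * (1 / c - 1 / b) - (log b - log c))
        + (L₁ / b - a / L₁) := by
    field_simp
    ring
  linarith

end TwoPairs

theorem stmt7 (a b c d : ℝ) (hab : a > b) (hbc : b ≥ c) (hcd : c > d) (hd : d > 0) :
    Real.exp (1 - logMean c d / logMean a b) < identricMean a b / identricMean c d ∧
    identricMean a b / identricMean c d < Real.exp (logMean a b / logMean c d - 1) := by
  rw [identricMean_div_identricMean hd hcd (hd.trans (hcd.trans_le hbc)) hab, exp_lt_exp,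
    exp_lt_exp]
  exact ⟨one_sub_logMean_div_lt hd hcd hbc hab, lt_logMean_div_sub_one hd hcd hbc hab⟩
end

section
/- For real numbers a > b ≥ c > d > 0, L(a,b)/L(c,d) > 1 + ln(G(a,b)/G(c,d)) > 2ab/(ab + cd), where L is the logarithmic mean and G the geometric mean. -/
noncomputable def geomMean (x y : ℝ) : ℝ := Real.sqrt (x * y)

/-! With `u = log (a/b)`, `v = log (c/d)` and `w = log (b/c) ≥ 0`, one has
`log (G(a,b)/G(c,d)) = u/2 + v/2 + w`. The first inequality combines the two-sided estimate
`y (1 + log(x/y)/2) ≤ L(x,y)` (from `exp u ≥ 1 + u + u²/2`) and `L(x,y) (1 + log(x/y)/2) < x`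
(from `L(x,y) < (x+y)/2`), chained through `c w ≤ b - c` and `L(c,d) < c ≤ b`:
`L(c,d) (1 + u/2 + v/2 + w) < c + c w + b u/2 ≤ b (1 + u/2) ≤ L(a,b)`.
The second inequality is `log t > 2(t-1)/(t+1)` for `t = ab/(cd) > 1`, the leading terms of
the series `log t = 2 artanh ((t-1)/(t+1))`. -/

open Real

lemma two_mul_sub_one_div_add_one_lt_log {t : ℝ} (ht : 1 < t) :
    2 * (t - 1) / (t + 1) < log t := by
  have hs := hasSum_log_one_add (a := t - 1) (by linarith)
  rw [add_sub_cancel] at hs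
  set x := (t - 1) / (t - 1 + 2) with hx_def
  have hx : 0 < x := div_pos (by linarith) (by linarith)
  have hpartial := sum_le_hasSum (Finset.range 2) (fun i _ => by positivity) hs
  simp only [Finset.sum_range_succ, Finset.sum_range_zero] at hpartial
  norm_num at hpartial
  have hfirst : 2 * (t - 1) / (t + 1) = 2 * x := by
    rw [hx_def, show t - 1 + 2 = t + 1 by ring]
    ring
  nlinarith [pow_pos hx 3]

lemma two_mul_sub_div_add_lt_log_div {x y : ℝ} (hy : 0 < y) (h : y < x) :
    2 * (x - y) / (x + y) < log (x / y) := by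
  convert two_mul_sub_one_div_add_one_lt_log ((one_lt_div hy).2 h) using 1
  field_simp

section LogMean

variable {x y : ℝ}

lemma logMean_eq_div_log_div (hy : 0 < y) (h : y < x) :
    logMean x y = (x - y) / log (x / y) := by
  rw [logMean, if_neg h.ne', log_div (hy.trans h).ne' hy.ne']

lemma logMean_lt_add_div_two (hy : 0 < y) (h : y < x) : logMean x y < (x + y) / 2 := by
  have hlog := two_mul_sub_div_add_lt_log_div hy h
  rw [div_lt_iff₀ (by linarith)] at hlog
  rw [logMean_eq_div_log_div hy h, div_lt_iff₀ (log_pos ((one_lt_div hy).2 h))]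
  linarith

lemma logMean_mul_one_add_half_log_lt (hy : 0 < y) (h : y < x) :
    logMean x y * (1 + log (x / y) / 2) < x := by
  have hlog : 0 < log (x / y) := log_pos ((one_lt_div hy).2 h)
  have hL : logMean x y * log (x / y) = x - y := by
    rw [logMean_eq_div_log_div hy h, div_mul_cancel₀ _ hlog.ne']
  nlinarith [logMean_lt_add_div_two hy h]

lemma mul_one_add_half_log_le_logMean (hy : 0 < y) (h : y < x) :
    y * (1 + log (x / y) / 2) ≤ logMean x y := by
  set u := log (x / y)
  have hu : 0 < u := log_pos ((one_lt_div hy).2 h)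
  have hexp : y * exp u = x := by
    rw [exp_log (div_pos (hy.trans h) hy)]
    field_simp
  rw [logMean_eq_div_log_div hy h, le_div_iff₀ hu]
  nlinarith [mul_le_mul_of_nonneg_left (quadratic_le_exp_of_nonneg hu.le) hy.le]

lemma logMean_pos (hy : 0 < y) (h : y < x) : 0 < logMean x y := by
  rw [logMean_eq_div_log_div hy h]
  exact div_pos (sub_pos.2 h) (log_pos ((one_lt_div hy).2 h))

lemma logMean_lt_left (hy : 0 < y) (h : y < x) : logMean x y < x := by
  have hlog : 0 < log (x / y) := log_pos ((one_lt_div hy).2 h)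
  nlinarith [logMean_mul_one_add_half_log_lt hy h, logMean_pos hy h]

end LogMean

lemma log_geomMean_div_geomMean {a b c d : ℝ} (ha : 0 < a) (hb : 0 < b) (hc : 0 < c)
    (hd : 0 < d) : log (geomMean a b / geomMean c d) = log (a * b / (c * d)) / 2 := by
  rw [geomMean, geomMean, ← sqrt_div (by positivity), log_sqrt (by positivity)]

lemma mul_log_div_le_sub {b c : ℝ} (hb : 0 < b) (hc : 0 < c) : c * log (b / c) ≤ b - c := by
  have h := mul_le_mul_of_nonneg_left (log_le_sub_one_of_pos (div_pos hb hc)) hc.le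
  rwa [mul_sub, mul_div_cancel₀ _ hc.ne', mul_one] at h

lemma two_mul_div_add_lt_one_add_half_log_div {p q : ℝ} (hq : 0 < q) (h : q < p) :
    2 * p / (p + q) < 1 + log (p / q) / 2 := by
  have hlog := two_mul_sub_div_add_lt_log_div hq h
  have hpq : 2 * p / (p + q) = 1 + (p - q) / (p + q) := by
    have : p + q ≠ 0 := by linarith
    field_simp
    ring
  rw [hpq]
  rw [mul_div_assoc] at hlog
  linarith

theorem stmt11 (a b c d : ℝ) (hab : a > b) (hbc : b ≥ c) (hcd : c > d) (hd : d > 0) :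
    logMean a b / logMean c d > 1 + Real.log (geomMean a b / geomMean c d) ∧
    1 + Real.log (geomMean a b / geomMean c d) > 2 * a * b / (a * b + c * d) := by
  have hc : 0 < c := hd.trans hcd
  have hb : 0 < b := hc.trans_le hbc
  have ha : 0 < a := hb.trans hab
  rw [log_geomMean_div_geomMean ha hb hc hd]
  refine ⟨?_, ?_⟩
  · have hsplit : log (a * b / (c * d)) = log (a / b) + log (c / d) + 2 * log (b / c) := by
      rw [show a * b / (c * d) = a / b * (c / d) * (b / c) ^ 2 by field_simp,
        log_mul (by positivity) (by positivity), log_mul (by positivity) (by positivity),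
        log_pow]
      push_cast
      ring
    have hLcd := logMean_lt_left hd hcd
    have hw : 0 ≤ log (b / c) := log_nonneg ((one_le_div hc).2 hbc)
    have hu : 0 < log (a / b) := log_pos ((one_lt_div hb).2 hab)
    rw [hsplit, gt_iff_lt, lt_div_iff₀ (logMean_pos hd hcd)]
    nlinarith [logMean_mul_one_add_half_log_lt hd hcd, mul_one_add_half_log_le_logMean hb hab,
      mul_log_div_le_sub hb hc, mul_le_mul_of_nonneg_right (hLcd.le.trans hbc) hu.le,
      mul_le_mul_of_nonneg_right hLcd.le hw]
  · rw [mul_assoc]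
    exact two_mul_div_add_lt_one_add_half_log_div (by positivity)
      (by nlinarith [mul_lt_mul_of_pos_right hcd hc, mul_lt_mul_of_pos_left hab hb])
end
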